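/- arXiv:2603.25174 — 6 statements merged into one kernel-verified Lean document; each statement's English description precedes it below -/
import Mathlib

section
/- For every integer t ≥ 2 and every integer k ≥ 1, the Stern polynomial a_t(2^k−1; z) equals the sum ∑_{i=1}^{k} z^{(t^k−t^i)/(t−1)}. -/
open Polynomial

/-- The (Type 1) Stern polynomials `a_t(n; z) ∈ ℤ[z]` of Dilcher and Eriksen:
`a_t(0;z) = 0`, `a_t(1;z) = 1`, and for `n ≥ 1`,
`a_t(2n;z) = z·a_t(n;z^t)`, `a_t(2n+1;z) = a_t(n+1;z^t) + a_t(n;z^t)`. -/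
noncomputable def sternPoly (t : ℕ) : ℕ → Polynomial ℤ
  | 0 => 0
  | 1 => 1
  | n + 2 =>
    if h : (n + 2) % 2 = 0 then
      X * (sternPoly t ((n + 2) / 2)).comp (X ^ t)
    else
      (sternPoly t ((n + 2) / 2 + 1)).comp (X ^ t) +
        (sternPoly t ((n + 2) / 2)).comp (X ^ t)
decreasing_by all_goals omega


lemma stern_even (t n : ℕ) (hn : 1 ≤ n) :
    sternPoly t (2 * n) = X * (sternPoly t n).comp (X ^ t) := by
  obtain ⟨m, rfl⟩ := Nat.exists_eq_add_of_le hn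
  have h : 2 * (1 + m) = 2 * m + 2 := by ring
  have h2 : (2 * m + 2) % 2 = 0 := by omega
  have h3 : (2 * m + 2) / 2 = 1 + m := by omega
  rw [h, sternPoly]
  simp [h2, h3]

lemma stern_odd (t n : ℕ) (hn : 1 ≤ n) :
    sternPoly t (2 * n + 1) =
      (sternPoly t (n + 1)).comp (X ^ t) + (sternPoly t n).comp (X ^ t) := by
  obtain ⟨m, rfl⟩ := Nat.exists_eq_add_of_le hn
  have h : 2 * (1 + m) + 1 = (2 * m + 1) + 2 := by ring
  have h2 : (2 * m + 1 + 2) % 2 = 1 := by omega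
  have h3 : (2 * m + 1 + 2) / 2 = 1 + m := by omega
  rw [h, sternPoly]
  simp [h2, h3]
lemma stern_two_pow (t k : ℕ) :
    sternPoly t (2 ^ k) = X ^ (∑ j ∈ Finset.range k, t ^ j) := by
  induction k with
  | zero => simp [sternPoly]
  | succ k ih =>
    rw [pow_succ, mul_comm, stern_even t _ (Nat.one_le_two_pow), ih,
      pow_comp, X_comp, ← pow_mul, geom_sum_succ, pow_add, pow_one, mul_comm]

lemma finset_sum_comp {ι : Type*} (s : Finset ι) (f : ι → Polynomial ℤ)
    (q : Polynomial ℤ) : (∑ i ∈ s, f i).comp q = ∑ i ∈ s, (f i).comp q := by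
  simp [Polynomial.comp, Polynomial.eval₂_finset_sum]

lemma pow_sum_shift (t a b : ℕ) :
    ∑ j ∈ Finset.Ico (a + 1) (b + 1), t ^ j = t * ∑ j ∈ Finset.Ico a b, t ^ j := by
  rw [Finset.mul_sum, Finset.sum_Ico_eq_sum_range, Finset.sum_Ico_eq_sum_range]
  have h : b + 1 - (a + 1) = b - a := by omega
  rw [h]
  refine Finset.sum_congr rfl fun i _ => ?_
  rw [← pow_succ']
  ring_nf


/-- For integers `t ≥ 2` and `k ≥ 1`, one has
`a_t(2^k - 1; z) = ∑_{i=1}^{k} z^{(t^k - t^i)/(t-1)}`, where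
`(t^k - t^i)/(t-1) = t^i + t^{i+1} + ⋯ + t^{k-1}`. -/
theorem sternPoly_two_pow_sub_one (t k : ℕ) (ht : 2 ≤ t) (hk : 1 ≤ k) :
    sternPoly t (2 ^ k - 1) =
      ∑ i ∈ Finset.Icc 1 k, X ^ (∑ j ∈ Finset.Ico i k, t ^ j) := by
  induction k with
  | zero => omega
  | succ k ih =>
    rcases Nat.eq_or_lt_of_le hk with h1 | h1
    · simp [← h1, sternPoly]
    · have hk' : 1 ≤ k := by omega
      have hp : 1 ≤ 2 ^ k := Nat.one_le_two_pow
      have hp2 : 2 ≤ 2 ^ k := by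
        calc 2 = 2 ^ 1 := rfl
        _ ≤ 2 ^ k := Nat.pow_le_pow_right (by norm_num) hk'
      have h : 2 ^ (k + 1) - 1 = 2 * (2 ^ k - 1) + 1 := by
        have : 2 ^ (k + 1) = 2 * 2 ^ k := by rw [pow_succ]; ring
        omega
      have h2 : 2 ^ k - 1 + 1 = 2 ^ k := by omega
      rw [h, stern_odd t _ (by omega), h2, stern_two_pow, ih hk', finset_sum_comp]
      simp only [pow_comp, X_comp, ← pow_mul]
      rw [← Finset.Ico_add_one_right_eq_Icc, ← Finset.Ico_add_one_right_eq_Icc (b := k + 1),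
        Finset.sum_Ico_eq_sum_range, Finset.sum_Ico_eq_sum_range]
      have hc1 : k + 1 - 1 = k := by omega
      have hc2 : k + 1 + 1 - 1 = k + 1 := by omega
      rw [hc1, hc2, Finset.sum_range_succ']
      rw [add_comm]
      congr 1
      · refine Finset.sum_congr rfl fun i _ => ?_
        have : 1 + (i + 1) = (1 + i) + 1 := by omega
        rw [this, pow_sum_shift]
      · have : (1 : ℕ) + 0 = 0 + 1 := by omega
        rw [this, pow_sum_shift, Finset.range_eq_Ico]
end

section
/- For every integer t ≥ 2 and every natural number n, every coefficient of the Stern polynomial a_t(n;z) is equal to 0 or 1. -/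
open Polynomial

lemma coeff_comp_X_pow (p : Polynomial ℤ) {t : ℕ} (ht : 1 ≤ t) (m : ℕ) :
    (p.comp (X ^ t)).coeff m = if t ∣ m then p.coeff (m / t) else 0 := by
  rw [Polynomial.comp_eq_sum_left, Polynomial.coeff_sum]
  simp only [← pow_mul, coeff_C_mul, coeff_X_pow, mul_ite, mul_one, mul_zero]
  by_cases hd : t ∣ m
  · obtain ⟨s, rfl⟩ := hd
    rw [Nat.mul_div_cancel_left s ht]
    rw [if_pos (dvd_mul_right t s)]
    rw [Polynomial.sum]
    rw [Finset.sum_eq_single s]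
    · simp
    · intro b _ hb
      rw [if_neg]
      intro h
      exact hb (Nat.eq_of_mul_eq_mul_left (by omega) h.symm)
    · intro hs
      simp [Polynomial.notMem_support_iff.mp hs]
  · rw [if_neg hd, Polynomial.sum, Finset.sum_eq_zero]
    intro b _
    rw [if_neg]
    intro h
    exact hd ⟨b, h⟩

lemma stern_good (t : ℕ) (ht : 2 ≤ t) : ∀ n m : ℕ,
    ((sternPoly t n).coeff m = 0 ∨ (sternPoly t n).coeff m = 1) ∧
      ((sternPoly t n).coeff m ≠ 0 → m % t = (n + 1) % 2) := by
  intro n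
  induction n using Nat.strong_induction_on with
  | _ n ih =>
    match n with
    | 0 => intro m; simp [sternPoly]
    | 1 =>
      intro m
      rcases eq_or_ne m 0 with rfl | hm
      · refine ⟨Or.inr ?_, fun _ => ?_⟩
        · simp [sternPoly]
        · simp [Nat.mod_eq_of_lt (by omega : 0 < t)]
      · refine ⟨Or.inl ?_, fun h => absurd ?_ h⟩ <;>
          simp [sternPoly, Polynomial.coeff_one, hm]
    | n + 2 =>
      intro m
      rw [sternPoly]
      by_cases h2 : (n + 2) % 2 = 0
      · rw [dif_pos h2]
        match m with
        | 0 => simp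
        | m + 1 =>
          rw [coeff_X_mul, coeff_comp_X_pow _ (by omega)]
          by_cases hd : t ∣ m
          · rw [if_pos hd]
            obtain ⟨s, rfl⟩ := hd
            have IH := ih ((n + 2) / 2) (by omega) (t * s / t)
            refine ⟨IH.1, fun _ => ?_⟩
            have : (t * s + 1) % t = 1 % t := Nat.mul_add_mod t s 1
            rw [this, Nat.mod_eq_of_lt (by omega)]
            omega
          · rw [if_neg hd]
            exact ⟨Or.inl rfl, fun h => absurd rfl h⟩
      · rw [dif_neg h2]
        have hn : n % 2 = 1 := by omega
        rw [coeff_add, coeff_comp_X_pow _ (by omega), coeff_comp_X_pow _ (by omega)]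
        by_cases hd : t ∣ m
        · rw [if_pos hd, if_pos hd]
          have IH1 := ih ((n + 2) / 2 + 1) (by omega) (m / t)
          have IH2 := ih ((n + 2) / 2) (by omega) (m / t)
          have hm0 : m % t = 0 := Nat.mod_eq_zero_of_dvd hd
          constructor
          · rcases IH1.1 with h1 | h1 <;> rcases IH2.1 with h2' | h2' <;>
              rw [h1, h2']
            · exact Or.inl (by ring)
            · exact Or.inr (by ring)
            · exact Or.inr (by ring)
            · exfalso
              have e1 := IH1.2 (by rw [h1]; exact one_ne_zero)
              have e2 := IH2.2 (by rw [h2']; exact one_ne_zero)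
              omega
          · intro _
            omega
        · simp [hd]


/-- For every integer `t ≥ 2` and every natural number `n`, every coefficient of the
Stern polynomial `a_t(n; z)` is `0` or `1`. -/
theorem sternPoly_coeff_zero_or_one (t : ℕ) (ht : 2 ≤ t) (n m : ℕ) :
    (sternPoly t n).coeff m = 0 ∨ (sternPoly t n).coeff m = 1 := by
  exact (stern_good t ht n m).1
end

section
/- Let t ≥ 2 and k ≥ 1 be integers and set α_n = (2^{kn} − (−1)^n)/(2^k + 1) for n ≥ 0. Then for all n ≥ 1 the Stern polynomials satisfy the three-term recurrence a_t(α_{n+1}; z) = a_t(2^k−1; z)·a_t(α_n; z^{t^k}) + a_t(2^k; z^{t^k})·a_t(α_{n−1}; z^{t^{2k}}). -/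
open Polynomial

/-- `α_n = (2^{kn} - (-1)^n) / (2^k + 1)`, a nonnegative integer. -/
def sternAlpha (k n : ℕ) : ℕ :=
  (((2 : ℤ) ^ (k * n) - (-1) ^ n) / (2 ^ k + 1)).toNat

lemma sternPoly_zero' (t : ℕ) : sternPoly t 0 = 0 := by rw [sternPoly]
lemma sternPoly_one' (t : ℕ) : sternPoly t 1 = 1 := by rw [sternPoly]

lemma sternPoly_even (t n : ℕ) :
    sternPoly t (2 * n) = X * (sternPoly t n).comp (X ^ t) := by
  match n with
  | 0 => simp [sternPoly]
  | n + 1 =>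
    have h : 2 * (n + 1) = 2 * n + 2 := by ring
    rw [h, sternPoly]
    have h1 : (2 * n + 2) % 2 = 0 := by omega
    have h2 : (2 * n + 2) / 2 = n + 1 := by omega
    rw [dif_pos h1, h2]

lemma sternPoly_odd (t n : ℕ) :
    sternPoly t (2 * n + 1) =
      (sternPoly t (n + 1)).comp (X ^ t) + (sternPoly t n).comp (X ^ t) := by
  match n with
  | 0 => simp [sternPoly]
  | n + 1 =>
    have h : 2 * (n + 1) + 1 = (2 * n + 1) + 2 := by ring
    rw [h, sternPoly]
    have h1 : ¬((2 * n + 1) + 2) % 2 = 0 := by omega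
    have h2 : ((2 * n + 1) + 2) / 2 = n + 1 := by omega
    rw [dif_neg h1, h2]

lemma stern_comp_comp (p : Polynomial ℤ) (a b : ℕ) :
    (p.comp (X ^ a)).comp (X ^ b) = p.comp (X ^ (a * b)) := by
  rw [Polynomial.comp_assoc, Polynomial.X_pow_comp, ← pow_mul, Nat.mul_comm b a]

lemma stern_pow_mul (t k m : ℕ) :
    sternPoly t (2 ^ k * m) = sternPoly t (2 ^ k) * (sternPoly t m).comp (X ^ t ^ k) := by
  induction k with
  | zero => simp [sternPoly_one']
  | succ k ih =>
    have h : 2 ^ (k + 1) * m = 2 * (2 ^ k * m) := by ring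
    rw [h, sternPoly_even, ih, mul_comp, stern_comp_comp,
      show (2:ℕ) ^ (k + 1) = 2 * 2 ^ k from by ring, sternPoly_even t (2 ^ k),
      show t ^ k * t = t ^ (k + 1) from (pow_succ t k).symm]
    ring

lemma stern_I (t k m : ℕ) :
    sternPoly t (2 ^ k * m + 1) =
      (sternPoly t (m + 1)).comp (X ^ t ^ k)
        + sternPoly t (2 ^ k - 1) * (sternPoly t m).comp (X ^ t ^ k) := by
  induction k with
  | zero => simp [sternPoly_zero']
  | succ k ih =>
    have hpos : 1 ≤ (2:ℕ) ^ k := Nat.one_le_two_pow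
    have h : 2 ^ (k + 1) * m + 1 = 2 * (2 ^ k * m) + 1 := by ring
    rw [h, sternPoly_odd, ih, stern_pow_mul]
    rw [show (2:ℕ) ^ (k + 1) - 1 = 2 * (2 ^ k - 1) + 1 from by omega, sternPoly_odd,
      show (2:ℕ) ^ k - 1 + 1 = 2 ^ k from by omega]
    simp only [add_comp, mul_comp, stern_comp_comp]
    rw [show t ^ k * t = t ^ (k + 1) from (pow_succ t k).symm]
    ring

lemma stern_II (t k m : ℕ) :
    sternPoly t (2 ^ k * (m + 1) - 1) =
      sternPoly t (2 ^ k - 1) * (sternPoly t (m + 1)).comp (X ^ t ^ k)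
        + (sternPoly t m).comp (X ^ t ^ k) := by
  induction k with
  | zero => simp [sternPoly_zero']
  | succ k ih =>
    have hpos : 1 ≤ (2:ℕ) ^ k := Nat.one_le_two_pow
    have hpos2 : 1 ≤ 2 ^ k * (m + 1) := Nat.mul_pos (by omega) (by omega)
    have h : 2 ^ (k + 1) * (m + 1) - 1 = 2 * (2 ^ k * (m + 1) - 1) + 1 := by
      have : 2 ^ (k + 1) * (m + 1) = 2 * (2 ^ k * (m + 1)) := by ring
      omega
    rw [h, sternPoly_odd, show 2 ^ k * (m + 1) - 1 + 1 = 2 ^ k * (m + 1) from by omega,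
      stern_pow_mul, ih]
    rw [show (2:ℕ) ^ (k + 1) - 1 = 2 * (2 ^ k - 1) + 1 from by omega, sternPoly_odd,
      show (2:ℕ) ^ k - 1 + 1 = 2 ^ k from by omega]
    simp only [add_comp, mul_comp, stern_comp_comp]
    rw [show t ^ k * t = t ^ (k + 1) from (pow_succ t k).symm]
    ring

lemma alpha_dvd (k n : ℕ) : ((2:ℤ)^k + 1) ∣ 2^(k*n) - (-1)^n := by
  have h : ((2:ℤ)^k + 1) = 2^k - (-1) := by ring
  rw [h, pow_mul]
  exact sub_dvd_pow_sub_pow _ _ n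

lemma alphaZ_nonneg (k n : ℕ) : 0 ≤ ((2:ℤ)^(k*n) - (-1)^n) / (2^k + 1) := by
  apply Int.ediv_nonneg _ (by positivity)
  have h1 : ((-1:ℤ))^n = 1 ∨ ((-1:ℤ))^n = -1 := neg_one_pow_eq_or ℤ n
  have h2 : (1:ℤ) ≤ 2^(k*n) := by
    have := Nat.one_le_two_pow (n := k*n); exact_mod_cast this
  rcases h1 with h|h <;> rw [h] <;> linarith

lemma sternAlpha_cast (k n : ℕ) :
    (sternAlpha k n : ℤ) = ((2:ℤ)^(k*n) - (-1)^n) / (2^k + 1) :=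
  Int.toNat_of_nonneg (alphaZ_nonneg k n)

lemma alphaZ_succ (k n : ℕ) :
    ((2:ℤ)^(k*(n+1)) - (-1)^(n+1)) / (2^k + 1)
      = 2^k * (((2:ℤ)^(k*n) - (-1)^n) / (2^k + 1)) + (-1)^n := by
  have hd : ((2:ℤ)^k + 1) ≠ 0 := by positivity
  obtain ⟨c, hc⟩ := alpha_dvd k n
  have h2 : (2:ℤ)^(k*(n+1)) - (-1)^(n+1) = ((2:ℤ)^k + 1) * (2^k * c + (-1)^n) := by
    have e : (2:ℤ)^(k*(n+1)) = 2^(k*n) * 2^k := by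
      rw [show k*(n+1) = k*n + k from by ring, pow_add]
    rw [e, pow_succ]
    linear_combination (2:ℤ)^k * hc
  rw [hc, h2, Int.mul_ediv_cancel_left _ hd, Int.mul_ediv_cancel_left _ hd]

lemma sternAlpha_succ_even (k n : ℕ) (hn : Even n) :
    sternAlpha k (n + 1) = 2 ^ k * sternAlpha k n + 1 := by
  have h : (sternAlpha k (n + 1) : ℤ) = ((2 ^ k * sternAlpha k n + 1 : ℕ) : ℤ) := by
    push_cast
    rw [sternAlpha_cast, sternAlpha_cast, alphaZ_succ, hn.neg_one_pow]
  exact_mod_cast h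

lemma sternAlpha_succ_odd (k n : ℕ) (hn : Odd n) :
    sternAlpha k (n + 1) + 1 = 2 ^ k * sternAlpha k n := by
  have h : ((sternAlpha k (n + 1) + 1 : ℕ) : ℤ) = ((2 ^ k * sternAlpha k n : ℕ) : ℤ) := by
    push_cast
    rw [sternAlpha_cast, sternAlpha_cast, alphaZ_succ, hn.neg_one_pow]
    ring
  exact_mod_cast h

/-- Three-term recurrence for the subsequence `a_t(α_n; z)`:
`a_t(α_{n+1}; z) = a_t(2^k-1; z)·a_t(α_n; z^{t^k}) + a_t(2^k; z^{t^k})·a_t(α_{n-1}; z^{t^{2k}})`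
for `n ≥ 1`. -/
theorem sternPoly_alpha_rec (t k : ℕ) (ht : 2 ≤ t) (hk : 1 ≤ k) (n : ℕ) (hn : 1 ≤ n) :
    sternPoly t (sternAlpha k (n + 1)) =
      sternPoly t (2 ^ k - 1) * (sternPoly t (sternAlpha k n)).comp (X ^ t ^ k) +
        (sternPoly t (2 ^ k)).comp (X ^ t ^ k) *
          (sternPoly t (sternAlpha k (n - 1))).comp (X ^ t ^ (2 * k)) := by
  obtain ⟨m, rfl⟩ : ∃ m, n = m + 1 := ⟨n - 1, by omega⟩
  simp only [Nat.add_sub_cancel]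
  have hkk : t ^ k * t ^ k = t ^ (2 * k) := by rw [← pow_add, ← two_mul]
  rcases Nat.even_or_odd m with hm | hm
  · -- m even, so n = m+1 odd: α_{m+2} = 2^k·α_{m+1} - 1
    have h1 : sternAlpha k (m + 1) = 2 ^ k * sternAlpha k m + 1 :=
      sternAlpha_succ_even k m hm
    have h2 : sternAlpha k (m + 1 + 1) + 1 = 2 ^ k * sternAlpha k (m + 1) :=
      sternAlpha_succ_odd k (m + 1) hm.add_one
    have hpos : 1 ≤ (2:ℕ) ^ k := Nat.one_le_two_pow
    have h3 : sternAlpha k (m + 1 + 1) = 2 ^ k * (2 ^ k * sternAlpha k m + 1) - 1 := by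
      rw [← h1]; omega
    rw [h3, stern_II t k (2 ^ k * sternAlpha k m), ← h1,
      stern_pow_mul, mul_comp, stern_comp_comp, hkk]
  · -- m odd, so n = m+1 even: α_{m+2} = 2^k·α_{m+1} + 1
    rw [sternAlpha_succ_even k (m + 1) hm.add_one, stern_I]
    rw [sternAlpha_succ_odd k m hm, stern_pow_mul, mul_comp, stern_comp_comp, hkk]
    ring
end

section
/- Let t ≥ 2 and k ≥ 1 be integers and set α_n = (2^{kn} − (−1)^n)/(2^k + 1). Let H_k : ℂ → ℂ be a function such that for every complex z with |z| < 1, the values a_t(α_n; z) converge to H_k(z) as n → ∞. Then for every z with |z| < 1, H_k satisfies the functional equation H_k(z) = a_t(2^k−1; z)·H_k(z^{t^k}) + a_t(2^k; z^{t^k})·H_k(z^{t^{2k}}). -/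
open Polynomial

lemma sternPoly_two_pow_mul (t k m : ℕ) :
    sternPoly t (2 ^ k * m) =
      X ^ (∑ i ∈ Finset.range k, t ^ i) * (sternPoly t m).comp (X ^ t ^ k) := by
  induction k with
  | zero => simp
  | succ k ih =>
    rw [pow_succ, mul_comm (2 ^ k) 2, mul_assoc, sternPoly_even, ih]
    simp only [mul_comp, pow_comp, X_comp, comp_assoc, ← pow_mul, ← pow_succ']
    rw [← mul_assoc, ← pow_succ']
    congr 2
    rw [Finset.sum_range_succ', Finset.mul_sum]
    simp [← pow_succ']

lemma sternPoly_two_pow (t k : ℕ) :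
    sternPoly t (2 ^ k) = X ^ (∑ i ∈ Finset.range k, t ^ i) := by
  have := sternPoly_two_pow_mul t k 1
  simpa [sternPoly] using this

lemma sternPoly_key (t k m : ℕ) :
    sternPoly t (2 ^ k * m + (2 ^ k - 1)) =
      (sternPoly t m).comp (X ^ t ^ k) +
        sternPoly t (2 ^ k - 1) * (sternPoly t (m + 1)).comp (X ^ t ^ k) := by
  induction k with
  | zero => simp [sternPoly]
  | succ k ih =>
    have hp : 1 ≤ 2 ^ k := Nat.one_le_two_pow
    have e1 : 2 ^ (k + 1) * m = 2 * (2 ^ k * m) := by ring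
    have e2 : (2:ℕ) ^ (k + 1) = 2 * 2 ^ k := by ring
    have e3 : 2 ^ k * (m + 1) = 2 ^ k * m + 2 ^ k := by ring
    have h1 : 2 ^ (k + 1) * m + (2 ^ (k + 1) - 1)
        = 2 * (2 ^ k * m + (2 ^ k - 1)) + 1 := by omega
    have h2 : 2 ^ k * m + (2 ^ k - 1) + 1 = 2 ^ k * (m + 1) := by omega
    have h3 : 2 ^ (k + 1) - 1 = 2 * (2 ^ k - 1) + 1 := by omega
    have h4 : 2 ^ k - 1 + 1 = 2 ^ k := by omega
    rw [h1, sternPoly_odd, h2, ih, sternPoly_two_pow_mul, h3, sternPoly_odd, h4,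
      sternPoly_two_pow]
    simp only [add_comp, mul_comp, pow_comp, X_comp, comp_assoc, ← pow_mul, ← pow_succ']
    ring

lemma sternAlpha_spec (k n : ℕ) :
    ((2 : ℤ) ^ k + 1) * (sternAlpha k n : ℤ) = 2 ^ (k * n) - (-1) ^ n := by
  have hdvd : ((2 : ℤ) ^ k + 1) ∣ 2 ^ (k * n) - (-1) ^ n := by
    have : ((2 : ℤ) ^ k + 1) ∣ (2 ^ k) ^ n - (-1) ^ n := by
      have := sub_dvd_pow_sub_pow ((2 : ℤ) ^ k) (-1) n
      simpa using this
    simpa [pow_mul] using this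
  have hpos : (0 : ℤ) < 2 ^ k + 1 := by positivity
  have hnn : (0 : ℤ) ≤ 2 ^ (k * n) - (-1) ^ n := by
    have h1 : ((-1 : ℤ)) ^ n ≤ 1 := by
      rcases Nat.even_or_odd n with h | h
      · rw [h.neg_one_pow]
      · rw [h.neg_one_pow]; omega
    have h2 : (1 : ℤ) ≤ 2 ^ (k * n) := one_le_pow₀ (by norm_num)
    omega
  obtain ⟨c, hc⟩ := hdvd
  have hc' : c = sternAlpha k n := by
    unfold sternAlpha
    rw [hc, Int.mul_ediv_cancel_left _ (by omega)]
    have : 0 ≤ c := by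
      by_contra hneg
      push_neg at hneg
      nlinarith [hnn, hc]
    omega
  rw [← hc', hc]

lemma sternAlpha_even_succ (k j : ℕ) :
    sternAlpha k (2 * j + 1) = 2 ^ k * sternAlpha k (2 * j) + 1 := by
  have h1 := sternAlpha_spec k (2 * j)
  have h2 := sternAlpha_spec k (2 * j + 1)
  have hd : ((2:ℤ) ^ k + 1) ≠ 0 := by positivity
  have hm1 : ((-1:ℤ)) ^ (2 * j) = 1 := by rw [pow_mul]; norm_num
  have hm2 : ((-1:ℤ)) ^ (2 * j + 1) = -1 := by rw [pow_succ, hm1]; ring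
  rw [hm1] at h1
  have hE : (2:ℤ) ^ (k * (2 * j)) = (2 ^ k + 1) * (sternAlpha k (2 * j) : ℤ) + 1 := by
    linarith [h1]
  have e : (k * (2 * j + 1)) = k + k * (2 * j) := by ring
  have : ((2:ℤ) ^ k + 1) * (sternAlpha k (2 * j + 1) : ℤ)
      = ((2:ℤ) ^ k + 1) * ((2 ^ k * sternAlpha k (2 * j) + 1 : ℕ) : ℤ) := by
    rw [h2, e, pow_add, hm2, hE]
    push_cast
    ring
  have := mul_left_cancel₀ hd this
  exact_mod_cast this

lemma sternAlpha_even_succ2 (k j : ℕ) :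
    sternAlpha k (2 * j + 2) = 2 ^ (2 * k) * sternAlpha k (2 * j) + (2 ^ k - 1) := by
  have h1 := sternAlpha_spec k (2 * j)
  have h2 := sternAlpha_spec k (2 * j + 2)
  have hd : ((2:ℤ) ^ k + 1) ≠ 0 := by positivity
  have hk1 : (1:ℕ) ≤ 2 ^ k := Nat.one_le_two_pow
  have hm1 : ((-1:ℤ)) ^ (2 * j) = 1 := by rw [pow_mul]; norm_num
  have hm2 : ((-1:ℤ)) ^ (2 * j + 2) = 1 := by rw [pow_add, hm1]; norm_num
  rw [hm1] at h1
  have hE : (2:ℤ) ^ (k * (2 * j)) = (2 ^ k + 1) * (sternAlpha k (2 * j) : ℤ) + 1 := by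
    linarith [h1]
  have e : (k * (2 * j + 2)) = (k + k) + k * (2 * j) := by ring
  have : ((2:ℤ) ^ k + 1) * (sternAlpha k (2 * j + 2) : ℤ)
      = ((2:ℤ) ^ k + 1) * ((2 ^ (2 * k) * sternAlpha k (2 * j) + (2 ^ k - 1) : ℕ) : ℤ) := by
    rw [h2, e, pow_add, pow_add, hm2, hE]
    push_cast [hk1]
    rw [show (2:ℤ) ^ (2 * k) = 2 ^ k * 2 ^ k by rw [two_mul, pow_add]]
    ring
  have := mul_left_cancel₀ hd this
  exact_mod_cast this

lemma key_eval (t k a : ℕ) (z : ℂ) :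
    aeval z (sternPoly t (2 ^ (2 * k) * a + (2 ^ k - 1))) =
      aeval z (sternPoly t (2 ^ k - 1)) * aeval (z ^ t ^ k) (sternPoly t (2 ^ k * a + 1)) +
      aeval (z ^ t ^ k) (sternPoly t (2 ^ k)) * aeval (z ^ t ^ (2 * k)) (sternPoly t a) := by
  have e1 : 2 ^ (2 * k) * a + (2 ^ k - 1) = 2 ^ k * (2 ^ k * a) + (2 ^ k - 1) := by
    rw [two_mul, pow_add]; ring_nf
  rw [e1, sternPoly_key, sternPoly_two_pow_mul]
  have hx : aeval z (X ^ t ^ k : Polynomial ℤ) = z ^ t ^ k := by simp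
  have hx2 : aeval (z ^ t ^ k) (X ^ t ^ k : Polynomial ℤ) = z ^ t ^ (2 * k) := by
    simp [← pow_mul, two_mul, pow_add]
  simp only [map_add, map_mul, aeval_comp, hx, hx2, sternPoly_two_pow, map_pow, aeval_X]
  ring


/-- If `H_k : ℂ → ℂ` is such that `a_t(α_n; z) → H_k(z)` as `n → ∞` for every `|z| < 1`,
then `H_k(z) = a_t(2^k-1; z)·H_k(z^{t^k}) + a_t(2^k; z^{t^k})·H_k(z^{t^{2k}})`
for every `|z| < 1`. -/
theorem Hk_functional_equation (t k : ℕ) (ht : 2 ≤ t) (hk : 1 ≤ k) (H : ℂ → ℂ)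
    (hH : ∀ z : ℂ, ‖z‖ < 1 →
      Filter.Tendsto (fun n => Polynomial.aeval z (sternPoly t (sternAlpha k n)))
        Filter.atTop (nhds (H z)))
    (z : ℂ) (hz : ‖z‖ < 1) :
    H z = Polynomial.aeval z (sternPoly t (2 ^ k - 1)) * H (z ^ t ^ k) +
      Polynomial.aeval (z ^ t ^ k) (sternPoly t (2 ^ k)) * H (z ^ t ^ (2 * k)) := by
  have hz1 : ‖z ^ t ^ k‖ < 1 := by
    rw [norm_pow]
    exact pow_lt_one₀ (norm_nonneg z) hz (by positivity)
  have hz2 : ‖z ^ t ^ (2 * k)‖ < 1 := by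
    rw [norm_pow]
    exact pow_lt_one₀ (norm_nonneg z) hz (by positivity)
  have hseq : ∀ j : ℕ,
      aeval z (sternPoly t (sternAlpha k (2 * j + 2))) =
        aeval z (sternPoly t (2 ^ k - 1)) *
          aeval (z ^ t ^ k) (sternPoly t (sternAlpha k (2 * j + 1))) +
        aeval (z ^ t ^ k) (sternPoly t (2 ^ k)) *
          aeval (z ^ t ^ (2 * k)) (sternPoly t (sternAlpha k (2 * j))) := by
    intro j
    rw [sternAlpha_even_succ2, sternAlpha_even_succ]
    exact key_eval t k (sternAlpha k (2 * j)) z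
  have c0 : Filter.Tendsto (fun j : ℕ => 2 * j) Filter.atTop Filter.atTop :=
    Filter.tendsto_atTop_mono (fun n => by simp only [id_eq]; omega) Filter.tendsto_id
  have c1 : Filter.Tendsto (fun j : ℕ => 2 * j + 1) Filter.atTop Filter.atTop :=
    Filter.tendsto_atTop_mono (fun n => by simp only [id_eq]; omega) Filter.tendsto_id
  have c2 : Filter.Tendsto (fun j : ℕ => 2 * j + 2) Filter.atTop Filter.atTop :=
    Filter.tendsto_atTop_mono (fun n => by simp only [id_eq]; omega) Filter.tendsto_id
  have t1 : Filter.Tendsto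
      (fun j : ℕ => aeval z (sternPoly t (sternAlpha k (2 * j + 2))))
      Filter.atTop (nhds (H z)) := (hH z hz).comp c2
  have t2 : Filter.Tendsto
      (fun j : ℕ => aeval (z ^ t ^ k) (sternPoly t (sternAlpha k (2 * j + 1))))
      Filter.atTop (nhds (H (z ^ t ^ k))) := (hH _ hz1).comp c1
  have t3 : Filter.Tendsto
      (fun j : ℕ => aeval (z ^ t ^ (2 * k)) (sternPoly t (sternAlpha k (2 * j))))
      Filter.atTop (nhds (H (z ^ t ^ (2 * k)))) := (hH _ hz2).comp c0
  have trhs := (t2.const_mul (aeval z (sternPoly t (2 ^ k - 1)))).add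
    (t3.const_mul (aeval (z ^ t ^ k) (sternPoly t (2 ^ k))))
  exact tendsto_nhds_unique t1 (Filter.Tendsto.congr (fun j => (hseq j).symm) trhs)
end

section
/- Let t ≥ 2, k ≥ 1 be integers. For every n ≥ 1 the polynomials G^{(n)}_{21}(z) and G^{(n)}_{22}(z) are nonzero, and for every n ≥ 2 the polynomial G^{(n)}_{12}(z) is nonzero. -/
open Polynomial

/-- The matrix `B(z)` with first row `(0, a_t(2^k; z^{t^k}))` and
second row `(1, -a_t(2^k - 1; z))`. -/
noncomputable def sternB (t k : ℕ) : Matrix (Fin 2) (Fin 2) (Polynomial ℤ) :=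
  !![0, (sternPoly t (2 ^ k)).comp (X ^ t ^ k); 1, -sternPoly t (2 ^ k - 1)]

/-- `G^{(n)}(z) = B(z^{t^{(n-1)k}}) ⋯ B(z^{t^k}) B(z)` (with `G^{(0)} = I`). -/
noncomputable def sternG (t k : ℕ) : ℕ → Matrix (Fin 2) (Fin 2) (Polynomial ℤ)
  | 0 => 1
  | n + 1 => (sternB t k).map (fun p => p.comp (X ^ t ^ (n * k))) * sternG t k n

lemma sternPoly_eval_one_pos (t : ℕ) : ∀ n, 1 ≤ n → 0 < (sternPoly t n).eval 1 := by
  intro n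
  induction n using Nat.strong_induction_on with
  | _ n ih =>
    intro hn
    match n, hn with
    | 1, _ => simp [sternPoly]
    | (m+2), _ =>
      rw [sternPoly]
      split
      · simp only [eval_mul, eval_X, eval_comp, eval_pow, one_pow, one_mul]
        exact ih ((m+2)/2) (by omega) (by omega)
      · simp only [eval_add, eval_comp, eval_pow, eval_X, one_pow]
        have h1 := ih ((m+2)/2 + 1) (by omega) (by omega)
        have h2 := ih ((m+2)/2) (by omega) (by omega)
        exact add_pos h1 h2

lemma sternG_eval_succ (t k n : ℕ) (j : Fin 2) :
    ((sternG t k (n+1) 0 j).eval 1 =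
      (sternPoly t (2 ^ k)).eval 1 * (sternG t k n 1 j).eval 1) ∧
    ((sternG t k (n+1) 1 j).eval 1 =
      (sternG t k n 0 j).eval 1 -
        (sternPoly t (2 ^ k - 1)).eval 1 * (sternG t k n 1 j).eval 1) := by
  have hu : sternG t k (n+1) = (sternB t k).map (fun p => p.comp (X ^ t ^ (n * k))) * sternG t k n := by
    rw [sternG]
  rw [hu]
  constructor <;>
    simp [Matrix.mul_apply, Fin.sum_univ_two, sternB, eval_comp, sub_eq_add_neg]

lemma sternG_sign (t k : ℕ) (hk : 1 ≤ k) : ∀ n, 1 ≤ n →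
    0 ≤ (-1 : ℤ)^n * (sternG t k n 0 0).eval 1 ∧
    0 < (-1 : ℤ)^(n+1) * (sternG t k n 0 1).eval 1 ∧
    0 < (-1 : ℤ)^(n+1) * (sternG t k n 1 0).eval 1 ∧
    0 < (-1 : ℤ)^n * (sternG t k n 1 1).eval 1 := by
  have ha : 0 < (sternPoly t (2 ^ k)).eval 1 :=
    sternPoly_eval_one_pos t _ (Nat.one_le_two_pow)
  have hc : 0 < (sternPoly t (2 ^ k - 1)).eval 1 :=
    sternPoly_eval_one_pos t _ (by have := Nat.one_lt_two_pow_iff.mpr (by omega : k ≠ 0); omega)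
  intro n
  induction n with
  | zero => omega
  | succ m ih =>
    intro _
    obtain ⟨h1, h2⟩ := sternG_eval_succ t k m 0
    obtain ⟨h3, h4⟩ := sternG_eval_succ t k m 1
    rcases Nat.eq_zero_or_pos m with rfl | hm
    · have e0 : ∀ i j : Fin 2, (sternG t k 0 i j).eval 1 = if i = j then 1 else 0 := by
        intro i j
        show ((1 : Matrix (Fin 2) (Fin 2) (Polynomial ℤ)) i j).eval 1 = _
        rw [Matrix.one_apply]
        split <;> simp
      simp only [e0] at h1 h2 h3 h4
      norm_num at h1 h2 h3 h4 ⊢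
      rw [h1, h2, h3, h4]
      refine ⟨le_of_eq (by ring), ha, by norm_num, by linarith⟩
    obtain ⟨p1, p2, p3, p4⟩ := ih hm
    have hE : ((-1 : ℤ))^(m+1+1) = (-1)^m := by
      rw [pow_succ, pow_succ]; ring
    have hF : ((-1 : ℤ))^(m+1) = -(-1)^m := by
      rw [pow_succ]; ring
    rw [h1, h2, h3, h4]
    simp only [hE, hF] at p2 p3 ⊢
    refine ⟨?_, ?_, ?_, ?_⟩
    · nlinarith [mul_pos ha p3]
    · nlinarith [mul_pos ha p4]
    · nlinarith [mul_pos hc p3, p1]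
    · nlinarith [mul_pos hc p4, p2]

/-- For every `n ≥ 1` the polynomials `G^{(n)}_{21}` and `G^{(n)}_{22}` are nonzero, and
for every `n ≥ 2` the polynomial `G^{(n)}_{12}` is nonzero. -/
theorem sternG_entries_ne_zero (t k : ℕ) (ht : 2 ≤ t) (hk : 1 ≤ k) :
    (∀ n : ℕ, 1 ≤ n → sternG t k n 1 0 ≠ 0 ∧ sternG t k n 1 1 ≠ 0) ∧
      ∀ n : ℕ, 2 ≤ n → sternG t k n 0 1 ≠ 0 := by
  constructor
  · intro n hn
    obtain ⟨-, -, h10, h11⟩ := sternG_sign t k hk n hn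
    constructor
    · intro h; rw [h] at h10; simp at h10
    · intro h; rw [h] at h11; simp at h11
  · intro n hn
    obtain ⟨-, h01, -, -⟩ := sternG_sign t k hk n (by omega)
    intro h; rw [h] at h01; simp at h01
end

section
/- Let t ≥ 2, k ≥ 1, n ≥ 1 and r ≥ 1 be integers. Suppose a(z), b(z) ∈ ℂ[z] are coprime polynomials and κ(z) ∈ ℂ[z] satisfies the two identities b(z^{t^{nk}})·G^{(n)}_{11}(z^r) + a(z^{t^{nk}})·G^{(n)}_{21}(z^r) = κ(z)·b(z) and b(z^{t^{nk}})·G^{(n)}_{12}(z^r) + a(z^{t^{nk}})·G^{(n)}_{22}(z^r) = κ(z)·a(z). Then κ(z) = c·z^u for some nonzero complex number c and some natural number u. -/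
open Polynomial

lemma sternPoly_two_pow_s16 (t : ℕ) : ∀ k, ∃ e, sternPoly t (2 ^ k) = X ^ e := by
  intro k
  induction k with
  | zero => exact ⟨0, by rw [pow_zero, sternPoly, pow_zero]⟩
  | succ k ih =>
    obtain ⟨e, he⟩ := ih
    refine ⟨e * t + 1, ?_⟩
    have h2 : 2 ^ (k + 1) = (2 ^ (k + 1) - 2) + 2 := by
      have : 2 ^ 1 ≤ 2 ^ (k+1) := Nat.pow_le_pow_right (by norm_num) (by omega)
      simp at this
      omega
    rw [h2, sternPoly]
    have hmod : (2 ^ (k + 1) - 2 + 2) % 2 = 0 := by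
      rw [← h2]; simp [Nat.pow_succ, Nat.mul_mod]
    have hdiv : (2 ^ (k + 1) - 2 + 2) / 2 = 2 ^ k := by
      rw [← h2, pow_succ]; omega
    rw [dif_pos hmod, hdiv, he]
    simp [pow_comp, X_comp, ← pow_mul, pow_succ, mul_comm]

noncomputable def compHom {R : Type*} [CommRing R] (q : Polynomial R) :
    Polynomial R →+* Polynomial R := eval₂RingHom C q

lemma compHom_apply {R : Type*} [CommRing R] (q p : Polynomial R) :
    compHom q p = p.comp q := rfl

lemma sternB_det (t k : ℕ) : ∃ m : ℕ,
    (sternB t k).det = -X ^ m := by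
  obtain ⟨e, he⟩ := sternPoly_two_pow_s16 t k
  refine ⟨t ^ k * e, ?_⟩
  rw [sternB, Matrix.det_fin_two_of, he]
  simp [pow_comp, X_comp, ← pow_mul]

lemma sternG_det (t k : ℕ) : ∀ n, ∃ m : ℕ, (sternG t k n).det = (-1) ^ n * X ^ m := by
  intro n
  induction n with
  | zero => exact ⟨0, by simp [sternG]⟩
  | succ n ih =>
    obtain ⟨m, hm⟩ := ih
    obtain ⟨mb, hmb⟩ := sternB_det t k
    refine ⟨mb * t ^ (n * k) + m, ?_⟩
    have hmap : (sternB t k).map (fun p => p.comp (X ^ t ^ (n * k)))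
        = (compHom (X ^ t ^ (n * k))).mapMatrix (sternB t k) := rfl
    rw [sternG, Matrix.det_mul, hmap, ← RingHom.map_det, hmb, hm]
    simp [compHom_apply, pow_comp, X_comp, ← pow_mul]
    ring

/-- Suppose `a(z), b(z) ∈ ℂ[z]` are coprime and `κ(z) ∈ ℂ[z]` satisfies
`b(z^{t^{nk}})·G^{(n)}_{11}(z^r) + a(z^{t^{nk}})·G^{(n)}_{21}(z^r) = κ(z)·b(z)` and
`b(z^{t^{nk}})·G^{(n)}_{12}(z^r) + a(z^{t^{nk}})·G^{(n)}_{22}(z^r) = κ(z)·a(z)`.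
Then `κ(z) = c·z^u` for some `c ∈ ℂ*` and some `u ∈ ℕ`. -/
theorem sternG_kappa_is_monomial (t k n r : ℕ) (ht : 2 ≤ t) (hk : 1 ≤ k) (hn : 1 ≤ n)
    (hr : 1 ≤ r) (a b κ : Polynomial ℂ) (hab : IsCoprime a b)
    (h1 : b.comp (X ^ t ^ (n * k)) *
            ((sternG t k n 0 0).map (Int.castRingHom ℂ)).comp (X ^ r) +
          a.comp (X ^ t ^ (n * k)) *
            ((sternG t k n 1 0).map (Int.castRingHom ℂ)).comp (X ^ r) = κ * b)
    (h2 : b.comp (X ^ t ^ (n * k)) *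
            ((sternG t k n 0 1).map (Int.castRingHom ℂ)).comp (X ^ r) +
          a.comp (X ^ t ^ (n * k)) *
            ((sternG t k n 1 1).map (Int.castRingHom ℂ)).comp (X ^ r) = κ * a) :
    ∃ (c : ℂ) (u : ℕ), c ≠ 0 ∧ κ = C c * X ^ u := by
  obtain ⟨m, hm⟩ := sternG_det t k n
  set N := t ^ (n * k) with hN
  set M00 := ((sternG t k n 0 0).map (Int.castRingHom ℂ)).comp (X ^ r) with hM00
  set M01 := ((sternG t k n 0 1).map (Int.castRingHom ℂ)).comp (X ^ r) with hM01
  set M10 := ((sternG t k n 1 0).map (Int.castRingHom ℂ)).comp (X ^ r) with hM10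
  set M11 := ((sternG t k n 1 1).map (Int.castRingHom ℂ)).comp (X ^ r) with hM11
  have hz : sternG t k n 0 0 * sternG t k n 1 1 - sternG t k n 0 1 * sternG t k n 1 0
      = (-1) ^ n * X ^ m := by rw [← Matrix.det_fin_two, hm]
  have hdet : M00 * M11 - M01 * M10 = (-1) ^ n * X ^ (m * r) := by
    have h := congrArg (fun p : Polynomial ℤ => (p.map (Int.castRingHom ℂ)).comp (X ^ r)) hz
    simp only [Polynomial.map_mul, Polynomial.map_sub, Polynomial.map_pow, Polynomial.map_neg,
      Polynomial.map_one, map_X, sub_comp, mul_comp, pow_comp, X_comp, neg_comp, one_comp,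
      ← pow_mul] at h
    simpa [hM00, hM01, hM10, hM11, Nat.mul_comm r m] using h
  have key1 : (-1 : Polynomial ℂ) ^ n * X ^ (m * r) * b.comp (X ^ N)
      = κ * (b * M11 - a * M10) := by
    rw [← hdet]; linear_combination M11 * h1 - M10 * h2
  have key2 : (-1 : Polynomial ℂ) ^ n * X ^ (m * r) * a.comp (X ^ N)
      = κ * (a * M00 - b * M01) := by
    rw [← hdet]; linear_combination M00 * h2 - M01 * h1
  have hs : ((-1 : Polynomial ℂ)) ^ n * (-1) ^ n = 1 := by
    rw [← pow_add]; exact Even.neg_one_pow ⟨n, rfl⟩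
  have dvd1 : κ ∣ X ^ (m * r) * b.comp (X ^ N) := by
    refine ⟨(-1) ^ n * (b * M11 - a * M10), ?_⟩
    linear_combination ((-1 : Polynomial ℂ) ^ n) * key1 - (X ^ (m * r) * b.comp (X ^ N)) * hs
  have dvd2 : κ ∣ X ^ (m * r) * a.comp (X ^ N) := by
    refine ⟨(-1) ^ n * (a * M00 - b * M01), ?_⟩
    linear_combination ((-1 : Polynomial ℂ) ^ n) * key2 - (X ^ (m * r) * a.comp (X ^ N)) * hs
  obtain ⟨u, v, huv⟩ := hab
  have hcop : u.comp (X ^ N) * a.comp (X ^ N) + v.comp (X ^ N) * b.comp (X ^ N) = 1 := by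
    have h := congrArg (fun p : Polynomial ℂ => p.comp (X ^ N)) huv
    simpa [add_comp, mul_comp, one_comp] using h
  have dvdX : κ ∣ X ^ (m * r) := by
    have hX : (X : Polynomial ℂ) ^ (m * r)
        = u.comp (X ^ N) * (X ^ (m * r) * a.comp (X ^ N))
          + v.comp (X ^ N) * (X ^ (m * r) * b.comp (X ^ N)) := by
      linear_combination (-(X ^ (m * r)) : Polynomial ℂ) * hcop
    rw [hX]
    exact dvd_add (dvd2.mul_left _) (dvd1.mul_left _)
  obtain ⟨i, hi, hassoc⟩ := (dvd_prime_pow Polynomial.prime_X (m * r)).mp dvdX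
  obtain ⟨w, hw⟩ := hassoc
  obtain ⟨c, hc, hcw⟩ := Polynomial.isUnit_iff.mp w.isUnit
  rw [← hcw] at hw
  refine ⟨c⁻¹, i, inv_ne_zero hc.ne_zero, ?_⟩
  have hc0 : c ≠ 0 := hc.ne_zero
  calc κ = κ * C c * C c⁻¹ := by
        rw [mul_assoc, ← C_mul, mul_inv_cancel₀ hc0, C_1, mul_one]
    _ = C c⁻¹ * X ^ i := by rw [hw]; ring
end
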